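/- arXiv:2007.05787 — 3 statements merged into one kernel-verified Lean document; each statement's English description precedes it below -/
import Mathlib

section
/- Weighted Hardy-type embedding: Let s₁ > s₂ ≥ 0 be integers and σ₁ > σ₂ > −1/2 real numbers with s₁ − s₂ = σ₁ − σ₂. Then there is a constant C = C(d, s₁, σ₁, σ₂) such that for every f smooth on the closed half-space and compactly supported, Σ_{|α|≤s₂} ‖x_d^{σ₂} ∂^α f‖_{L²(H)} ≤ C Σ_{|α|≤s₁} ‖x_d^{σ₁} ∂^α f‖_{L²(H)}; i.e., H^{s₁,σ₁} ⊂ H^{s₂,σ₂}. -/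
open MeasureTheory Set

noncomputable section

/-- The half-space `H = {x ∈ ℝ^{d+1} : x_last > 0}`. -/
def HS (d : ℕ) : Set (Fin (d + 1) → ℝ) := {x | 0 < x (Fin.last d)}

/-- The weighted `L²` norm `‖x_d^σ g‖_{L²(H)}`. -/
def wL2 (d : ℕ) (σ : ℝ) (g : (Fin (d + 1) → ℝ) → ℝ) : ℝ :=
  Real.sqrt (∫ x in HS d, x (Fin.last d) ^ (2 * σ : ℝ) * g x ^ 2)

/-- The weighted Sobolev norm `Σ_{n≤j} ‖x_d^σ |∂^n f|‖_{L²(H)}`, with the full `n`-th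
derivative measured by `iteratedFDeriv`. -/
def sobNorm (d : ℕ) (j : ℕ) (σ : ℝ) (f : (Fin (d + 1) → ℝ) → ℝ) : ℝ :=
  ∑ n ∈ Finset.range (j + 1), wL2 d σ (fun x => ‖iteratedFDeriv ℝ n f x‖)


lemma aux_int (p R : ℝ) (hp : -1 < p) (h : ℝ → ℝ) (hc : Continuous h)
    (h0 : ∀ t ≥ R, h t = 0) : IntegrableOn (fun t => t ^ p * h t) (Ioi 0) := by
  set S : ℝ := max R 1 with hS
  have hS0 : 0 < S := lt_of_lt_of_le one_pos (le_max_right _ _)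
  have hSR : R ≤ S := le_max_left _ _
  have hsplit : Ioi (0:ℝ) = Ioc 0 S ∪ Ioi S := (Ioc_union_Ioi_eq_Ioi hS0.le).symm
  rw [hsplit]
  apply IntegrableOn.union
  · obtain ⟨M, hM⟩ := (isCompact_Icc (a := (0:ℝ)) (b := S)).exists_bound_of_continuousOn
      hc.continuousOn
    have hrpow : IntegrableOn (fun t => M * t ^ p) (Ioc 0 S) := by
      exact ((intervalIntegrable_iff_integrableOn_Ioc_of_le hS0.le).mp
        (intervalIntegral.intervalIntegrable_rpow' hp)).const_mul M
    apply Integrable.mono' hrpow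
    · apply ContinuousOn.aestronglyMeasurable _ measurableSet_Ioc
      apply ContinuousOn.mul _ hc.continuousOn
      intro t ht
      exact (Real.continuousAt_rpow_const t p (Or.inl (ne_of_gt ht.1))).continuousWithinAt
    · rw [ae_restrict_iff' measurableSet_Ioc]
      filter_upwards with t ht
      have htp : 0 ≤ t ^ p := Real.rpow_nonneg ht.1.le p
      have hth : |h t| ≤ M := by
        have := hM t ⟨ht.1.le, ht.2⟩
        simpa [Real.norm_eq_abs] using this
      calc ‖t ^ p * h t‖ = t ^ p * |h t| := by
            rw [norm_mul, Real.norm_eq_abs, Real.norm_eq_abs, abs_of_nonneg htp]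
        _ ≤ t ^ p * M := mul_le_mul_of_nonneg_left hth htp
        _ = M * t ^ p := by ring
  · have : EqOn (fun t => t ^ p * h t) 0 (Ioi S) := by
      intro t ht
      simp [h0 t (le_trans hSR (le_of_lt ht))]
    exact (integrableOn_congr_fun this measurableSet_Ioi).mpr (integrableOn_zero)

lemma hardy_scalar (σ : ℝ) (hσ : -(1/2:ℝ) < σ) (G G' : ℝ → ℝ)
    (hd : ∀ t, HasDerivAt G (G' t) t) (hcG' : Continuous G') (R : ℝ)
    (hG0 : ∀ t ≥ R, G t = 0) (hG'0 : ∀ t ≥ R, G' t = 0) :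
    ∫ t in Ioi (0:ℝ), t ^ (2*σ) * (G t)^2
      ≤ (4/(2*σ+1)^2) * ∫ t in Ioi (0:ℝ), t ^ (2*σ+2) * (G' t)^2 := by
  have hGc : Continuous G := continuous_iff_continuousAt.mpr fun t => (hd t).continuousAt
  have hc0 : 0 < 2*σ+1 := by linarith
  have h2σ : -1 < 2*σ := by linarith
  have hAint : IntegrableOn (fun t => t ^ (2*σ) * ((2*σ+1) * (G t)^2)) (Ioi 0) :=
    aux_int _ R h2σ _ (by continuity) (fun t ht => by simp [hG0 t ht])
  have hBint : IntegrableOn (fun t => t ^ (2*σ+1) * (2 * G t * G' t)) (Ioi 0) :=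
    aux_int _ R (by linarith) _ (by continuity) (fun t ht => by simp [hG'0 t ht])
  have hφd : ∀ t ∈ Ioi (0:ℝ), HasDerivAt (fun t => t ^ (2*σ+1) * (G t)^2)
      (t ^ (2*σ) * ((2*σ+1) * (G t)^2) + t ^ (2*σ+1) * (2 * G t * G' t)) t := by
    intro t ht
    have h1 : HasDerivAt (fun t : ℝ => t ^ (2*σ+1)) ((2*σ+1) * t ^ (2*σ+1-1)) t :=
      Real.hasDerivAt_rpow_const (Or.inl (ne_of_gt ht))
    have h2 : HasDerivAt (fun t => (G t)^2) (2 * G t ^ 1 * G' t) t := (hd t).pow 2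
    have h3 := h1.mul h2
    refine h3.congr_deriv ?_
    have hce : 2*σ+1-1 = 2*σ := by ring
    rw [hce]
    ring
  have hcont : ContinuousWithinAt (fun t : ℝ => t ^ (2*σ+1) * (G t)^2) (Ici 0) 0 := by
    apply ContinuousAt.continuousWithinAt
    exact ((Real.continuousAt_rpow_const 0 (2*σ+1) (Or.inr hc0.le))).mul ((hGc.pow 2).continuousAt)
  have htend : Filter.Tendsto (fun t : ℝ => t ^ (2*σ+1) * (G t)^2) Filter.atTop (nhds 0) := by
    apply Filter.Tendsto.congr' _ tendsto_const_nhds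
    filter_upwards [Filter.eventually_ge_atTop R] with t ht
    simp [hG0 t ht]
  have key : ∫ t in Ioi (0:ℝ),
      (t ^ (2*σ) * ((2*σ+1) * (G t)^2) + t ^ (2*σ+1) * (2 * G t * G' t)) = 0 := by
    rw [integral_Ioi_of_hasDerivAt_of_tendsto hcont hφd (hAint.add hBint) htend]
    simp [Real.zero_rpow (ne_of_gt hc0)]
  have hsum : ∫ t in Ioi (0:ℝ), t ^ (2*σ) * ((2*σ+1) * (G t)^2)
      = - ∫ t in Ioi (0:ℝ), t ^ (2*σ+1) * (2 * G t * G' t) := by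
    have := integral_add hAint hBint
    rw [key] at this
    linarith
  have hD1 : IntegrableOn (fun t => (2*σ+1)/2 * (t ^ (2*σ) * (G t)^2)) (Ioi 0) :=
    (aux_int (2*σ) R h2σ (fun t => (G t)^2) (by continuity)
      (fun t ht => by simp [hG0 t ht])).const_mul _
  have hD2 : IntegrableOn (fun t => 2/(2*σ+1) * (t ^ (2*σ+2) * (G' t)^2)) (Ioi 0) :=
    (aux_int (2*σ+2) R (by linarith) (fun t => (G' t)^2) (by continuity)
      (fun t ht => by simp [hG'0 t ht])).const_mul _
  have hpt : ∀ t ∈ Ioi (0:ℝ), -(t ^ (2*σ+1) * (2 * G t * G' t))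
      ≤ (2*σ+1)/2 * (t ^ (2*σ) * (G t)^2) + 2/(2*σ+1) * (t ^ (2*σ+2) * (G' t)^2) := by
    intro t ht
    have ht0 : (0:ℝ) < t := ht
    have hsq : ∀ a : ℝ, (t ^ a)^2 = t ^ (a+a) := fun a => by rw [sq, ← Real.rpow_add ht0]
    have e1 : t ^ (2*σ) * (G t)^2 = (t ^ σ * G t)^2 := by
      rw [mul_pow, hsq, show σ+σ = 2*σ by ring]
    have e2 : t ^ (2*σ+2) * (G' t)^2 = (t ^ (σ+1) * G' t)^2 := by
      rw [mul_pow, hsq, show (σ+1)+(σ+1) = 2*σ+2 by ring]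
    have e3 : t ^ (2*σ+1) * (2 * G t * G' t) = 2 * ((t ^ σ * G t) * (t ^ (σ+1) * G' t)) := by
      have hq : t ^ (2*σ+1) = t ^ σ * t ^ (σ+1) := by
        rw [← Real.rpow_add ht0]; ring_nf
      rw [hq]; ring
    rw [e1, e2, e3]
    set X := t ^ σ * G t
    set Y := t ^ (σ+1) * G' t
    rw [← mul_le_mul_iff_of_pos_right (show (0:ℝ) < 2*(2*σ+1) by linarith)]
    have expand : ((2*σ+1)/2 * X^2 + 2/(2*σ+1) * Y^2) * (2*(2*σ+1))
        = (2*σ+1)^2*X^2 + 4*Y^2 := by field_simp; ring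
    rw [expand]
    nlinarith [sq_nonneg ((2*σ+1) * X + 2 * Y)]
  have hmono : - ∫ t in Ioi (0:ℝ), t ^ (2*σ+1) * (2 * G t * G' t)
      ≤ ∫ t in Ioi (0:ℝ), ((2*σ+1)/2 * (t ^ (2*σ) * (G t)^2)
        + 2/(2*σ+1) * (t ^ (2*σ+2) * (G' t)^2)) := by
    rw [← integral_neg]
    exact setIntegral_mono_on hBint.neg (hD1.add hD2) measurableSet_Ioi hpt
  have hAI : ∫ t in Ioi (0:ℝ), t ^ (2*σ) * ((2*σ+1) * (G t)^2)
      = (2*σ+1) * ∫ t in Ioi (0:ℝ), t ^ (2*σ) * (G t)^2 := by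
    rw [← integral_const_mul]
    apply setIntegral_congr_fun measurableSet_Ioi
    intro t ht
    ring
  have hDI : ∫ t in Ioi (0:ℝ), ((2*σ+1)/2 * (t ^ (2*σ) * (G t)^2)
        + 2/(2*σ+1) * (t ^ (2*σ+2) * (G' t)^2))
      = (2*σ+1)/2 * (∫ t in Ioi (0:ℝ), t ^ (2*σ) * (G t)^2)
        + 2/(2*σ+1) * (∫ t in Ioi (0:ℝ), t ^ (2*σ+2) * (G' t)^2) := by
    rw [integral_add hD1 hD2, integral_const_mul, integral_const_mul]
  set I₁ : ℝ := ∫ t in Ioi (0:ℝ), t ^ (2*σ) * (G t)^2 with hI₁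
  set I₂ : ℝ := ∫ t in Ioi (0:ℝ), t ^ (2*σ+2) * (G' t)^2 with hI₂
  have hfinal : (2*σ+1) * I₁ ≤ (2*σ+1)/2 * I₁ + 2/(2*σ+1) * I₂ := by
    rw [← hAI, ← hDI]
    calc ∫ t in Ioi (0:ℝ), t ^ (2*σ) * ((2*σ+1) * (G t)^2)
        = - ∫ t in Ioi (0:ℝ), t ^ (2*σ+1) * (2 * G t * G' t) := hsum
      _ ≤ _ := hmono
  have h3 : (2*σ+1)/2 * I₁ ≤ 2/(2*σ+1) * I₂ := by linarith
  have h4 := mul_le_mul_of_nonneg_left h3 (by positivity : (0:ℝ) ≤ 2/(2*σ+1))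
  have hne : (2*σ+1) ≠ 0 := ne_of_gt hc0
  calc I₁ = 2/(2*σ+1) * ((2*σ+1)/2 * I₁) := by field_simp
    _ ≤ 2/(2*σ+1) * (2/(2*σ+1) * I₂) := h4
    _ = 4/(2*σ+1)^2 * I₂ := by field_simp; ring

lemma hardy1D {F : Type*} [NormedAddCommGroup F] [NormedSpace ℝ F] [CompleteSpace F]
    (σ : ℝ) (hσ : -(1/2:ℝ) < σ) (u u' : ℝ → F)
    (hd : ∀ t, HasDerivAt u (u' t) t) (hc : Continuous u') (R : ℝ)
    (hu0 : ∀ t ≥ R, u t = 0) (hu'0 : ∀ t ≥ R, u' t = 0) :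
    ∫ t in Ioi (0:ℝ), t ^ (2*σ) * ‖u t‖^2
      ≤ (4/(2*σ+1)^2) * ∫ t in Ioi (0:ℝ), t ^ (2*σ+2) * ‖u' t‖^2 := by
  set G : ℝ → ℝ := fun t => -(∫ s in R..t, ‖u' s‖) with hG
  have hint : ∀ a b : ℝ, IntervalIntegrable (fun s => ‖u' s‖) volume a b :=
    fun a b => (hc.norm).intervalIntegrable a b
  have hGd : ∀ t, HasDerivAt G (-‖u' t‖) t := by
    intro t
    apply HasDerivAt.neg
    exact intervalIntegral.integral_hasDerivAt_right (hint R t)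
      ((hc.norm).stronglyMeasurable.stronglyMeasurableAtFilter) (hc.norm).continuousAt
  have hGc : Continuous G := continuous_iff_continuousAt.mpr fun t => (hGd t).continuousAt
  have hG0 : ∀ t ≥ R, G t = 0 := by
    intro t ht
    have : ∫ s in R..t, ‖u' s‖ = ∫ s in R..t, (0:ℝ) := by
      apply intervalIntegral.integral_congr
      intro s hs
      rw [uIcc_of_le ht] at hs
      simp [hu'0 s hs.1]
    simp [hG, this]
  have hGsymm : ∀ t, G t = ∫ s in t..R, ‖u' s‖ := by
    intro t
    rw [hG]
    simp [intervalIntegral.integral_symm t R]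
  have hGnonneg : ∀ t, 0 ≤ G t := by
    intro t
    rcases le_or_gt t R with h | h
    · rw [hGsymm]
      exact intervalIntegral.integral_nonneg h (fun s _ => norm_nonneg _)
    · rw [hG0 t h.le]
  have hbound : ∀ t, ‖u t‖ ≤ G t := by
    intro t
    rcases le_or_gt t R with h | h
    · have ftc : ∫ s in t..R, u' s = u R - u t := by
        apply intervalIntegral.integral_eq_sub_of_hasDerivAt
        · intro s _
          exact hd s
        · exact (hc.intervalIntegrable t R)
      have : ‖u t‖ = ‖∫ s in t..R, u' s‖ := by
        rw [ftc, hu0 R le_rfl, zero_sub, norm_neg]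
      rw [this, hGsymm]
      exact intervalIntegral.norm_integral_le_integral_norm h
    · rw [hu0 t h.le]
      simpa using hGnonneg t
  have step1 : ∫ t in Ioi (0:ℝ), t ^ (2*σ) * ‖u t‖^2
      ≤ ∫ t in Ioi (0:ℝ), t ^ (2*σ) * (G t)^2 := by
    apply integral_mono_of_nonneg
    · filter_upwards [self_mem_ae_restrict measurableSet_Ioi] with t ht
      exact mul_nonneg (Real.rpow_nonneg (le_of_lt ht) _) (pow_nonneg (norm_nonneg _) 2)
    · exact aux_int (2*σ) R (by linarith) (fun t => (G t)^2) (hGc.pow 2)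
        (fun t ht => by simp [hG0 t ht])
    · filter_upwards [self_mem_ae_restrict measurableSet_Ioi] with t ht
      apply mul_le_mul_of_nonneg_left _ (Real.rpow_nonneg (le_of_lt ht) _)
      exact pow_le_pow_left₀ (norm_nonneg _) (hbound t) 2
  have step2 := hardy_scalar σ hσ G (fun t => -‖u' t‖) hGd (hc.norm.neg) R hG0
    (fun t ht => by simp [hu'0 t ht])
  have step3 : ∫ t in Ioi (0:ℝ), t ^ (2*σ+2) * (-‖u' t‖)^2
      = ∫ t in Ioi (0:ℝ), t ^ (2*σ+2) * ‖u' t‖^2 := by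
    simp [neg_sq]
  calc ∫ t in Ioi (0:ℝ), t ^ (2*σ) * ‖u t‖^2
      ≤ ∫ t in Ioi (0:ℝ), t ^ (2*σ) * (G t)^2 := step1
    _ ≤ (4/(2*σ+1)^2) * ∫ t in Ioi (0:ℝ), t ^ (2*σ+2) * (-‖u' t‖)^2 := step2
    _ = (4/(2*σ+1)^2) * ∫ t in Ioi (0:ℝ), t ^ (2*σ+2) * ‖u' t‖^2 := by rw [step3]


lemma measurableSet_HS (d : ℕ) : MeasurableSet (HS d) :=
  measurableSet_lt measurable_const (measurable_pi_apply _)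

lemma lintegral_HS (d : ℕ) (F : (Fin (d + 1) → ℝ) → ENNReal) (hF : Measurable F) :
    ∫⁻ x in HS d, F x = ∫⁻ y : Fin d → ℝ, ∫⁻ t in Ioi (0:ℝ), F (Fin.snoc y t) := by
  rw [← lintegral_indicator (measurableSet_HS d)]
  set e := MeasurableEquiv.piFinSuccAbove (fun _ : Fin (d + 1) => ℝ) (Fin.last d) with he
  have hmp : MeasurePreserving e.symm volume volume :=
    (volume_preserving_piFinSuccAbove (fun _ : Fin (d + 1) => ℝ) (Fin.last d)).symm e
  have hind : Measurable ((HS d).indicator F) := hF.indicator (measurableSet_HS d)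
  rw [← hmp.lintegral_comp hind]
  have hsymm : ∀ (t : ℝ) (y : Fin d → ℝ), e.symm (t, y) = Fin.snoc y t := by
    intro t y
    rw [he, MeasurableEquiv.piFinSuccAbove_symm_apply]
    simp [Fin.insertNthEquiv, Fin.insertNth_last]
  rw [Measure.volume_eq_prod, lintegral_prod_symm (fun z : ℝ × (Fin d → ℝ) => (HS d).indicator F (e.symm z)) ((hind.comp e.symm.measurable).aemeasurable)]
  congr 1
  funext y
  have : ∀ t : ℝ, (HS d).indicator F (e.symm (t, y))
      = (Ioi (0:ℝ)).indicator (fun t => F (Fin.snoc y t)) t := by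
    intro t
    rw [hsymm]
    by_cases ht : 0 < t
    · have hmem : Fin.snoc y t ∈ HS d := by simpa [HS, Fin.snoc_last] using ht
      rw [indicator_of_mem hmem, indicator_of_mem (mem_Ioi.mpr ht)]
    · have hmem : Fin.snoc y t ∉ HS d := by simpa [HS, Fin.snoc_last] using ht
      rw [indicator_of_notMem hmem, indicator_of_notMem (by simpa [mem_Ioi] using ht)]
  simp_rw [this]
  rw [lintegral_indicator measurableSet_Ioi]


lemma hasDerivAt_snoc (d : ℕ) (y : Fin d → ℝ) (t : ℝ) :
    HasDerivAt (fun t : ℝ => (Fin.snoc y t : Fin (d+1) → ℝ)) (Pi.single (Fin.last d) 1) t := by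
  have heq : (fun t : ℝ => (Fin.snoc y t : Fin (d+1) → ℝ))
      = fun t => (Fin.snoc y 0 : Fin (d+1) → ℝ) + t • Pi.single (Fin.last d) 1 := by
    funext s
    funext j
    refine Fin.lastCases ?_ ?_ j
    · simp [Fin.snoc_last]
    · intro i
      simp [Fin.snoc_castSucc, Pi.single_eq_of_ne (Fin.castSucc_lt_last i).ne]
  rw [heq]
  simpa using ((hasDerivAt_id t).smul_const (Pi.single (Fin.last d) (1:ℝ))).const_add
    ((Fin.snoc y 0 : Fin (d+1) → ℝ))

lemma continuous_snoc (d : ℕ) (y : Fin d → ℝ) :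
    Continuous (fun t : ℝ => (Fin.snoc y t : Fin (d+1) → ℝ)) :=
  continuous_iff_continuousAt.mpr fun t => (hasDerivAt_snoc d y t).continuousAt

lemma norm_snoc_coord (d : ℕ) (y : Fin d → ℝ) (t : ℝ) :
    |t| ≤ ‖(Fin.snoc y t : Fin (d+1) → ℝ)‖ := by
  have := norm_le_pi_norm (Fin.snoc y t : Fin (d+1) → ℝ) (Fin.last d)
  simpa [Fin.snoc_last] using this

lemma norm_snoc_ge (d : ℕ) (y : Fin d → ℝ) (t : ℝ) :
    ‖y‖ ≤ ‖(Fin.snoc y t : Fin (d+1) → ℝ)‖ := by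
  refine (pi_norm_le_iff_of_nonneg (norm_nonneg _)).mpr fun i => ?_
  have := norm_le_pi_norm (Fin.snoc y t : Fin (d+1) → ℝ) (Fin.castSucc i)
  simpa [Fin.snoc_castSucc] using this

section slicework

variable {d : ℕ} {f : (Fin (d + 1) → ℝ) → ℝ}

lemma iter_zero_outside (n : ℕ) (R : ℝ) (hR : tsupport f ⊆ Metric.closedBall 0 R)
    (x : Fin (d+1) → ℝ) (hx : R < ‖x‖) : iteratedFDeriv ℝ n f x = 0 := by
  by_contra h
  have hmem : x ∈ tsupport f := support_iteratedFDeriv_subset n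
    (by simpa [Function.mem_support] using h)
  have := hR hmem
  rw [Metric.mem_closedBall, dist_zero_right] at this
  linarith

lemma slice_hardy (n : ℕ) (σ : ℝ) (hσ : -(1/2:ℝ) < σ)
    (hf : ContDiff ℝ (⊤ : ℕ∞) f) (hsupp : HasCompactSupport f) (y : Fin d → ℝ) :
    ∫ t in Ioi (0:ℝ), t ^ (2*σ) * ‖iteratedFDeriv ℝ n f (Fin.snoc y t)‖^2
      ≤ (4/(2*σ+1)^2) *
        ∫ t in Ioi (0:ℝ), t ^ (2*σ+2) * ‖iteratedFDeriv ℝ (n+1) f (Fin.snoc y t)‖^2 := by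
  obtain ⟨R, hR⟩ := hsupp.isBounded.subset_closedBall 0
  have h1 : ContDiff ℝ 1 (iteratedFDeriv ℝ n f) := hf.iteratedFDeriv_right (by exact_mod_cast le_top)
  have h1' : ContDiff ℝ 1 (iteratedFDeriv ℝ (n+1) f) := hf.iteratedFDeriv_right (by exact_mod_cast le_top)
  set u := fun t : ℝ => iteratedFDeriv ℝ n f (Fin.snoc y t) with hu
  set u' := fun t : ℝ =>
    fderiv ℝ (iteratedFDeriv ℝ n f) (Fin.snoc y t) (Pi.single (Fin.last d) 1) with hu'
  have hout : ∀ (m : ℕ) (t : ℝ), t ≥ R + 1 → iteratedFDeriv ℝ m f (Fin.snoc y t) = 0 := by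
    intro m t ht
    apply iter_zero_outside m R hR
    calc R < R + 1 := by linarith
      _ ≤ t := ht
      _ ≤ |t| := le_abs_self t
      _ ≤ _ := norm_snoc_coord d y t
  have hderiv : ∀ t, HasDerivAt u (u' t) t := by
    intro t
    exact (((h1.differentiable one_ne_zero) _).hasFDerivAt).comp_hasDerivAt t (hasDerivAt_snoc d y t)
  have hcont' : Continuous u' := by
    apply Continuous.clm_apply _ continuous_const
    exact (h1.continuous_fderiv one_ne_zero).comp (continuous_snoc d y)
  have hu0 : ∀ t ≥ R + 1, u t = 0 := fun t ht => hout n t ht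
  have hu'0 : ∀ t ≥ R + 1, u' t = 0 := by
    intro t ht
    have hopen : IsOpen (Metric.closedBall (0 : Fin (d+1) → ℝ) R)ᶜ :=
      Metric.isClosed_closedBall.isOpen_compl
    have hxmem : Fin.snoc y t ∈ (Metric.closedBall (0 : Fin (d+1) → ℝ) R)ᶜ := by
      simp only [mem_compl_iff, Metric.mem_closedBall, dist_zero_right, not_le]
      calc R < R + 1 := by linarith
        _ ≤ t := ht
        _ ≤ |t| := le_abs_self t
        _ ≤ _ := norm_snoc_coord d y t
    have hev : iteratedFDeriv ℝ n f =ᶠ[nhds (Fin.snoc y t : Fin (d+1) → ℝ)]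
        (fun _ => (0 : ContinuousMultilinearMap ℝ (fun _ : Fin n => (Fin (d+1) → ℝ)) ℝ)) := by
      filter_upwards [hopen.mem_nhds hxmem] with z hz
      apply iter_zero_outside n R hR
      simpa [Metric.mem_closedBall, dist_zero_right, not_le] using hz
    rw [hu']
    simp only
    rw [hev.fderiv_eq, fderiv_fun_const]
    simp
  have hnormbd : ∀ t, ‖u' t‖ ≤ ‖iteratedFDeriv ℝ (n+1) f (Fin.snoc y t)‖ := by
    intro t
    calc ‖u' t‖ ≤ ‖fderiv ℝ (iteratedFDeriv ℝ n f) (Fin.snoc y t)‖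
          * ‖(Pi.single (Fin.last d) 1 : Fin (d+1) → ℝ)‖ := ContinuousLinearMap.le_opNorm _ _
      _ = ‖iteratedFDeriv ℝ (n+1) f (Fin.snoc y t)‖ := by
          have hps : ‖(Pi.single (Fin.last d) 1 : Fin (d+1) → ℝ)‖ = 1 := by
            simpa using Pi.norm_single (G := fun _ : Fin (d+1) => ℝ) (i := Fin.last d) (1:ℝ)
          rw [norm_fderiv_iteratedFDeriv, hps, mul_one]
  calc ∫ t in Ioi (0:ℝ), t ^ (2*σ) * ‖u t‖^2
      ≤ (4/(2*σ+1)^2) * ∫ t in Ioi (0:ℝ), t ^ (2*σ+2) * ‖u' t‖^2 :=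
        hardy1D σ hσ u u' hderiv hcont' (R+1) hu0 hu'0
    _ ≤ (4/(2*σ+1)^2) * ∫ t in Ioi (0:ℝ), t ^ (2*σ+2) * ‖iteratedFDeriv ℝ (n+1) f (Fin.snoc y t)‖^2 := by
        apply mul_le_mul_of_nonneg_left _ (by positivity)
        apply integral_mono_of_nonneg
        · filter_upwards [self_mem_ae_restrict measurableSet_Ioi] with t ht
          exact mul_nonneg (Real.rpow_nonneg (le_of_lt ht) _) (pow_nonneg (norm_nonneg _) 2)
        · apply aux_int (2*σ+2) (R+1) (by linarith)
          · exact ((h1'.continuous).comp (continuous_snoc d y)).norm.pow 2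
          · intro t ht
            simp [hout (n+1) t ht]
        · filter_upwards [self_mem_ae_restrict measurableSet_Ioi] with t ht
          apply mul_le_mul_of_nonneg_left _ (Real.rpow_nonneg (le_of_lt ht) _)
          exact pow_le_pow_left₀ (norm_nonneg _) (hnormbd t) 2

lemma meas_weight (n : ℕ) (p : ℝ) (hf : ContDiff ℝ (⊤ : ℕ∞) f) :
    Measurable (fun x : Fin (d+1) → ℝ =>
      ENNReal.ofReal ((x (Fin.last d)) ^ p * ‖iteratedFDeriv ℝ n f x‖^2)) := by
  apply ENNReal.measurable_ofReal.comp
  apply Measurable.mul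
  · measurability
  · exact (((hf.iteratedFDeriv_right (by exact_mod_cast le_top) : ContDiff ℝ 1 _).continuous).norm.pow 2).measurable

lemma integrable_slice (n : ℕ) (p : ℝ) (hp : -1 < p) (hf : ContDiff ℝ (⊤ : ℕ∞) f)
    (R : ℝ) (hR : tsupport f ⊆ Metric.closedBall 0 R) (y : Fin d → ℝ) :
    IntegrableOn (fun t => t ^ p * ‖iteratedFDeriv ℝ n f (Fin.snoc y t)‖^2) (Ioi 0) := by
  apply aux_int p (R+1) hp
  · exact (((hf.iteratedFDeriv_right (by exact_mod_cast le_top) : ContDiff ℝ 1 _).continuous).comp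
      (continuous_snoc d y)).norm.pow 2
  · intro t ht
    have : iteratedFDeriv ℝ n f (Fin.snoc y t) = 0 := by
      apply iter_zero_outside n R hR
      calc R < R + 1 := by linarith
        _ ≤ t := ht
        _ ≤ |t| := le_abs_self t
        _ ≤ _ := norm_snoc_coord d y t
    simp [this]

lemma lint_step (n : ℕ) (σ : ℝ) (hσ : -(1/2:ℝ) < σ)
    (hf : ContDiff ℝ (⊤ : ℕ∞) f) (hsupp : HasCompactSupport f) :
    ∫⁻ x in HS d, ENNReal.ofReal ((x (Fin.last d)) ^ (2*σ) * ‖iteratedFDeriv ℝ n f x‖^2)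
      ≤ ENNReal.ofReal (4/(2*σ+1)^2) *
        ∫⁻ x in HS d, ENNReal.ofReal ((x (Fin.last d)) ^ (2*σ+2) * ‖iteratedFDeriv ℝ (n+1) f x‖^2) := by
  obtain ⟨R, hR⟩ := hsupp.isBounded.subset_closedBall 0
  rw [lintegral_HS d _ (meas_weight n (2*σ) hf), lintegral_HS d _ (meas_weight (n+1) (2*σ+2) hf),
    ← lintegral_const_mul' _ _ ENNReal.ofReal_ne_top]
  apply lintegral_mono
  intro y
  simp only [Fin.snoc_last]
  have hnn : ∀ (m : ℕ) (q : ℝ), (0:ℝ→ℝ) ≤ᶠ[ae (volume.restrict (Ioi (0:ℝ)))]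
      fun t => t ^ q * ‖iteratedFDeriv ℝ m f (Fin.snoc y t)‖^2 := by
    intro m q
    filter_upwards [self_mem_ae_restrict measurableSet_Ioi] with t ht
    exact mul_nonneg (Real.rpow_nonneg (le_of_lt ht) _) (pow_nonneg (norm_nonneg _) 2)
  rw [← ofReal_integral_eq_lintegral_ofReal (integrable_slice n (2*σ) (by linarith) hf R hR y) (hnn n (2*σ)),
    ← ofReal_integral_eq_lintegral_ofReal (integrable_slice (n+1) (2*σ+2) (by linarith) hf R hR y) (hnn (n+1) (2*σ+2)),
    ← ENNReal.ofReal_mul (by positivity)]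
  exact ENNReal.ofReal_le_ofReal (slice_hardy n σ hσ hf hsupp y)

lemma lint_finite (n : ℕ) (p : ℝ) (hp : -1 < p)
    (hf : ContDiff ℝ (⊤ : ℕ∞) f) (hsupp : HasCompactSupport f) :
    ∫⁻ x in HS d, ENNReal.ofReal ((x (Fin.last d)) ^ p * ‖iteratedFDeriv ℝ n f x‖^2) < ⊤ := by
  obtain ⟨R₀, hR₀⟩ := hsupp.isBounded.subset_closedBall 0
  set R := max R₀ 0 with hRdef
  have hR : tsupport f ⊆ Metric.closedBall 0 R :=
    hR₀.trans (Metric.closedBall_subset_closedBall (le_max_left _ _))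
  have hR0 : 0 ≤ R := le_max_right _ _
  rw [lintegral_HS d _ (meas_weight n p hf)]
  simp only [Fin.snoc_last]
  have hcont : Continuous (fun x : Fin (d+1) → ℝ => ‖iteratedFDeriv ℝ n f x‖^2) :=
    ((hf.iteratedFDeriv_right (by exact_mod_cast le_top) : ContDiff ℝ 1 _).continuous).norm.pow 2
  obtain ⟨M₀, hM₀⟩ := (isCompact_closedBall (0 : Fin (d+1) → ℝ) R).exists_bound_of_continuousOn
    hcont.continuousOn
  set M := max M₀ 0 with hMdef
  have hM : ∀ x : Fin (d+1) → ℝ, ‖iteratedFDeriv ℝ n f x‖^2 ≤ M := by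
    intro x
    by_cases hx : ‖x‖ ≤ R
    · refine le_trans (le_trans (le_abs_self _) ?_) (le_max_left _ _)
      simpa [Real.norm_eq_abs] using hM₀ x (by simpa [Metric.mem_closedBall, dist_zero_right] using hx)
    · rw [iter_zero_outside n R hR x (not_le.mp hx)]
      simp [hMdef]
  set J : ENNReal := ∫⁻ t in Ioc (0:ℝ) R, ENNReal.ofReal (t ^ p * M) with hJ
  have hJfin : J < ⊤ := by
    rcases eq_or_lt_of_le hR0 with h0 | h0
    · rw [hJ, ← h0]
      simp
    · apply Integrable.lintegral_lt_top
      exact ((intervalIntegrable_iff_integrableOn_Ioc_of_le hR0).mp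
        (intervalIntegral.intervalIntegrable_rpow' hp)).mul_const M
  have hbound : ∀ y : Fin d → ℝ,
      (∫⁻ t in Ioi (0:ℝ), ENNReal.ofReal (t ^ p * ‖iteratedFDeriv ℝ n f (Fin.snoc y t)‖^2))
        ≤ (Metric.closedBall (0 : Fin d → ℝ) R).indicator (fun _ => J) y := by
    intro y
    by_cases hy : y ∈ Metric.closedBall (0 : Fin d → ℝ) R
    · rw [indicator_of_mem hy]
      have hsplit : Ioi (0:ℝ) = Ioc 0 R ∪ Ioi R := (Ioc_union_Ioi_eq_Ioi hR0).symm
      rw [hsplit, lintegral_union measurableSet_Ioi Ioc_disjoint_Ioi_same]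
      have hzero : ∫⁻ t in Ioi R, ENNReal.ofReal (t ^ p * ‖iteratedFDeriv ℝ n f (Fin.snoc y t)‖^2) = 0 := by
        rw [← lintegral_zero (μ := volume.restrict (Ioi R))]
        apply setLIntegral_congr_fun measurableSet_Ioi
        intro t ht
        have : iteratedFDeriv ℝ n f (Fin.snoc y t) = 0 := by
          apply iter_zero_outside n R hR
          calc R < t := ht
            _ ≤ |t| := le_abs_self t
            _ ≤ _ := norm_snoc_coord d y t
        simp [this]
      rw [hzero, add_zero, hJ]
      apply setLIntegral_mono (by measurability)
      intro t ht
      apply ENNReal.ofReal_le_ofReal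
      exact mul_le_mul_of_nonneg_left (hM _) (Real.rpow_nonneg ht.1.le _)
    · have hzero : ∀ t ∈ Ioi (0:ℝ),
          ENNReal.ofReal (t ^ p * ‖iteratedFDeriv ℝ n f (Fin.snoc y t)‖^2) = 0 := by
        intro t ht
        have hy' : R < ‖y‖ := by
          simpa [Metric.mem_closedBall, dist_zero_right, not_le] using hy
        have : iteratedFDeriv ℝ n f (Fin.snoc y t) = 0 := by
          apply iter_zero_outside n R hR
          exact lt_of_lt_of_le hy' (norm_snoc_ge d y t)
        simp [this]
      rw [indicator_of_notMem hy]
      have hz2 : ∫⁻ t in Ioi (0:ℝ),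
          ENNReal.ofReal (t ^ p * ‖iteratedFDeriv ℝ n f (Fin.snoc y t)‖^2) = 0 := by
        rw [← lintegral_zero (μ := volume.restrict (Ioi (0:ℝ)))]
        apply setLIntegral_congr_fun measurableSet_Ioi
        intro t ht
        exact hzero t ht
      rw [hz2]
  calc ∫⁻ y : Fin d → ℝ, ∫⁻ t in Ioi (0:ℝ),
        ENNReal.ofReal (t ^ p * ‖iteratedFDeriv ℝ n f (Fin.snoc y t)‖^2)
      ≤ ∫⁻ y : Fin d → ℝ, (Metric.closedBall (0 : Fin d → ℝ) R).indicator (fun _ => J) y :=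
        lintegral_mono hbound
    _ = J * volume (Metric.closedBall (0 : Fin d → ℝ) R) := by
        rw [lintegral_indicator Metric.isClosed_closedBall.measurableSet, setLIntegral_const]
    _ < ⊤ := ENNReal.mul_lt_top hJfin measure_closedBall_lt_top

end slicework

lemma wL2_nonneg (d : ℕ) (σ : ℝ) (g : (Fin (d + 1) → ℝ) → ℝ) : 0 ≤ wL2 d σ g :=
  Real.sqrt_nonneg _

section wl2step

variable {d : ℕ} {f : (Fin (d + 1) → ℝ) → ℝ}

lemma wL2_eq_lintegral (n : ℕ) (σ : ℝ) (hf : ContDiff ℝ (⊤ : ℕ∞) f) :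
    wL2 d σ (fun x => ‖iteratedFDeriv ℝ n f x‖)
      = Real.sqrt ((∫⁻ x in HS d,
          ENNReal.ofReal ((x (Fin.last d)) ^ (2*σ) * ‖iteratedFDeriv ℝ n f x‖^2)).toReal) := by
  unfold wL2
  congr 1
  apply integral_eq_lintegral_of_nonneg_ae
  · filter_upwards [self_mem_ae_restrict (measurableSet_HS d)] with x hx
    exact mul_nonneg (Real.rpow_nonneg (le_of_lt hx) _) (pow_nonneg (norm_nonneg _) 2)
  · exact (Measurable.aestronglyMeasurable (by
      apply Measurable.mul
      · measurability
      · exact (((hf.iteratedFDeriv_right (by exact_mod_cast le_top) : ContDiff ℝ 1 _).continuous).norm.pow 2).measurable))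

lemma wL2_step (n : ℕ) (σ : ℝ) (hσ : -(1/2:ℝ) < σ)
    (hf : ContDiff ℝ (⊤ : ℕ∞) f) (hsupp : HasCompactSupport f) :
    wL2 d σ (fun x => ‖iteratedFDeriv ℝ n f x‖)
      ≤ (2/(2*σ+1)) * wL2 d (σ+1) (fun x => ‖iteratedFDeriv ℝ (n+1) f x‖) := by
  have hc0 : 0 < 2*σ+1 := by linarith
  rw [wL2_eq_lintegral n σ hf, wL2_eq_lintegral (n+1) (σ+1) hf]
  have hexp : 2*(σ+1) = 2*σ+2 := by ring
  rw [hexp]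
  set A := ∫⁻ x in HS d,
    ENNReal.ofReal ((x (Fin.last d)) ^ (2*σ) * ‖iteratedFDeriv ℝ n f x‖^2) with hA
  set B := ∫⁻ x in HS d,
    ENNReal.ofReal ((x (Fin.last d)) ^ (2*σ+2) * ‖iteratedFDeriv ℝ (n+1) f x‖^2) with hB
  have hstep : A ≤ ENNReal.ofReal (4/(2*σ+1)^2) * B := lint_step n σ hσ hf hsupp
  have hBfin : B < ⊤ := lint_finite (n+1) (2*σ+2) (by linarith) hf hsupp
  have h1 : A.toReal ≤ (ENNReal.ofReal (4/(2*σ+1)^2) * B).toReal :=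
    ENNReal.toReal_mono (ENNReal.mul_ne_top ENNReal.ofReal_ne_top hBfin.ne) hstep
  have h2 : (ENNReal.ofReal (4/(2*σ+1)^2) * B).toReal = (4/(2*σ+1)^2) * B.toReal := by
    rw [ENNReal.toReal_mul, ENNReal.toReal_ofReal (by positivity)]
  calc Real.sqrt A.toReal ≤ Real.sqrt ((4/(2*σ+1)^2) * B.toReal) := by
        apply Real.sqrt_le_sqrt
        rw [← h2]
        exact h1
    _ = (2/(2*σ+1)) * Real.sqrt B.toReal := by
        rw [Real.sqrt_mul (by positivity), show (4/(2*σ+1)^2 : ℝ) = (2/(2*σ+1))^2 by rw [div_pow]; norm_num,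
          Real.sqrt_sq (div_pos two_pos hc0).le]

lemma wL2_iter (d : ℕ) (k : ℕ) (σ : ℝ) (hσ : -(1/2:ℝ) < σ) (n : ℕ) :
    ∃ C : ℝ, 0 < C ∧ ∀ f : (Fin (d + 1) → ℝ) → ℝ, ContDiff ℝ (⊤ : ℕ∞) f → HasCompactSupport f →
      wL2 d σ (fun x => ‖iteratedFDeriv ℝ n f x‖)
        ≤ C * wL2 d (σ + k) (fun x => ‖iteratedFDeriv ℝ (n + k) f x‖) := by
  induction k generalizing σ n with
  | zero =>
    refine ⟨1, one_pos, fun f hf hs => ?_⟩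
    simp
  | succ k ih =>
    obtain ⟨C, hC, hCle⟩ := ih (σ+1) (by linarith) (n+1)
    refine ⟨(2/(2*σ+1)) * C, mul_pos (div_pos two_pos (by linarith)) hC, fun f hf hs => ?_⟩
    have h1 := wL2_step n σ hσ hf hs
    have h2 := hCle f hf hs
    have he1 : σ + 1 + (k:ℝ) = σ + ((k:ℕ)+1 : ℕ) := by push_cast; ring
    have he2 : n + 1 + k = n + (k+1) := by omega
    rw [he1, he2] at h2
    calc wL2 d σ (fun x => ‖iteratedFDeriv ℝ n f x‖)
        ≤ (2/(2*σ+1)) * wL2 d (σ+1) (fun x => ‖iteratedFDeriv ℝ (n+1) f x‖) := h1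
      _ ≤ (2/(2*σ+1)) * (C * wL2 d (σ + ((k:ℕ)+1 : ℕ)) (fun x => ‖iteratedFDeriv ℝ (n+(k+1)) f x‖)) := by
          apply mul_le_mul_of_nonneg_left h2 (div_pos two_pos (by linarith)).le
      _ = (2/(2*σ+1)) * C * wL2 d (σ + ((k:ℕ)+1 : ℕ)) (fun x => ‖iteratedFDeriv ℝ (n+(k+1)) f x‖) := by
          ring

end wl2step

/-- **Weighted Hardy-type embedding** (Lemma 2.2): if `s₁ > s₂ ≥ 0`, `σ₁ > σ₂ > −1/2`
and `s₁ − s₂ = σ₁ − σ₂`, then `H^{s₁,σ₁} ⊂ H^{s₂,σ₂}` on the half-space. -/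
theorem weighted_hardy_embedding
    (d : ℕ) (s₁ s₂ : ℕ) (σ₁ σ₂ : ℝ)
    (hs : s₂ < s₁) (hσ₂ : -(1 / 2 : ℝ) < σ₂) (hσ : σ₂ < σ₁)
    (hbal : (s₁ : ℝ) - (s₂ : ℝ) = σ₁ - σ₂) :
    ∃ C : ℝ, 0 < C ∧
      ∀ f : (Fin (d + 1) → ℝ) → ℝ, ContDiff ℝ (⊤ : ℕ∞) f → HasCompactSupport f →
        sobNorm d s₂ σ₂ f ≤ C * sobNorm d s₁ σ₁ f := by
  obtain ⟨k, hk⟩ : ∃ k, s₁ = s₂ + k := ⟨s₁ - s₂, by omega⟩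
  have hkcast : (k:ℝ) = σ₁ - σ₂ := by
    rw [hk] at hbal
    push_cast at hbal
    linarith
  have hσk : σ₂ + (k:ℝ) = σ₁ := by rw [hkcast]; ring
  have hks : ∀ n ≤ s₂, n + k ≤ s₁ := by
    intro n hn
    omega
  set Cf : ℕ → ℝ := fun n => (wL2_iter d k σ₂ hσ₂ n).choose with hCf
  have hCfpos : ∀ n, 0 < Cf n := fun n => (wL2_iter d k σ₂ hσ₂ n).choose_spec.1
  have hCfle : ∀ n, ∀ f : (Fin (d + 1) → ℝ) → ℝ, ContDiff ℝ (⊤ : ℕ∞) f → HasCompactSupport f →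
      wL2 d σ₂ (fun x => ‖iteratedFDeriv ℝ n f x‖)
        ≤ Cf n * wL2 d (σ₂ + k) (fun x => ‖iteratedFDeriv ℝ (n + k) f x‖) :=
    fun n => (wL2_iter d k σ₂ hσ₂ n).choose_spec.2
  refine ⟨∑ n ∈ Finset.range (s₂+1), Cf n, Finset.sum_pos (fun n _ => hCfpos n) ⟨0, by simp⟩,
    fun f hf hsupp => ?_⟩
  have hterm : ∀ n ∈ Finset.range (s₂+1),
      wL2 d σ₂ (fun x => ‖iteratedFDeriv ℝ n f x‖) ≤ Cf n * sobNorm d s₁ σ₁ f := by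
    intro n hn
    have hn' : n ≤ s₂ := Nat.lt_succ_iff.mp (Finset.mem_range.mp hn)
    have h1 := hCfle n f hf hsupp
    rw [hσk] at h1
    have h2 : wL2 d σ₁ (fun x => ‖iteratedFDeriv ℝ (n + k) f x‖) ≤ sobNorm d s₁ σ₁ f := by
      apply Finset.single_le_sum (f := fun m => wL2 d σ₁ (fun x => ‖iteratedFDeriv ℝ m f x‖))
        (fun m _ => wL2_nonneg d σ₁ _)
      rw [Finset.mem_range]
      have := hks n hn'
      omega
    calc wL2 d σ₂ (fun x => ‖iteratedFDeriv ℝ n f x‖)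
        ≤ Cf n * wL2 d σ₁ (fun x => ‖iteratedFDeriv ℝ (n + k) f x‖) := h1
      _ ≤ Cf n * sobNorm d s₁ σ₁ f := mul_le_mul_of_nonneg_left h2 (hCfpos n).le
  calc sobNorm d s₂ σ₂ f
      = ∑ n ∈ Finset.range (s₂+1), wL2 d σ₂ (fun x => ‖iteratedFDeriv ℝ n f x‖) := rfl
    _ ≤ ∑ n ∈ Finset.range (s₂+1), Cf n * sobNorm d s₁ σ₁ f := Finset.sum_le_sum hterm
    _ = (∑ n ∈ Finset.range (s₂+1), Cf n) * sobNorm d s₁ σ₁ f := by rw [Finset.sum_mul]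
end
end

section
/- Diagonalization of the relativistic Euler velocity equation: Let O ⊂ ℝ^{1+d} be open and let (ϱ,u) be a C¹ solution of the relativistic Euler equations on O with ϱ > 0, p(ϱ) + ϱ > 0, u⁰ > 0 and u^α u_α = −1. Let f : (0,∞) → (0,∞) be C¹ with f'(y)/f(y) = p'(y)/(p(y)+y) for all y > 0, and set v^α = f(ϱ)u^α. Then for every α = 0,…,d, on O: ∂_t v^α + (v^i/v⁰)∂_i v^α + (c_s²(ϱ) f(ϱ)² / ((p(ϱ)+ϱ) v⁰)) m^{αμ} ∂_μ ϱ = 0, where c_s² = p'(ϱ). Moreover v⁰ = √( f(ϱ)² + |v|² ) with |v|² = Σ_i (v^i)². -/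
/-!
Multiplied by `m^{αα}`, the momentum equation reads
`(p+ϱ) u^μ∂_μ u^α + p'(ϱ) (m^{αμ}∂_μ ϱ + u^α u^μ∂_μ ϱ) = 0`. For `v^α = f(ϱ) u^α` the product and
chain rules give `u^μ∂_μ v^α = f'(ϱ) u^α u^μ∂_μ ϱ + f(ϱ) u^μ∂_μ u^α`, and `f'(p+ϱ) = p' f` makes the
`u^α u^μ∂_μ ϱ` terms cancel. Dividing by `u⁰` turns `u^μ∂_μ` into `∂_t + (v^i/v⁰)∂_i`.
The formula for `v⁰` is the normalization `(u⁰)² = 1 + |u|²` multiplied by `f(ϱ)²`.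
-/

open Set

noncomputable section

/-- The diagonal entries of the Minkowski metric `m = diag(−1,1,…,1)` on `ℝ^{1+d}`. -/
def mlt (d : ℕ) (α : Fin (d + 1)) : ℝ := if α = 0 then -1 else 1

/-- Partial derivative `∂_μ` of a function on `ℝ^{1+d}`. -/
def pder (d : ℕ) (μ : Fin (d + 1)) (F : (Fin (d + 1) → ℝ) → ℝ) (q : Fin (d + 1) → ℝ) : ℝ :=
  fderiv ℝ F q (Pi.single μ 1)

/-- The relativistic Euler equations with equation of state `peos` on the set `O`:
`u^μ ∂_μ ϱ + (p+ϱ) ∂_μ u^μ = 0` and `(p+ϱ) u^μ ∂_μ u_α + Π^μ_α ∂_μ p = 0`, where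
`Π^μ_α = δ^μ_α + u^μ u_α` and indices are lowered with `m = diag(−1,1,…,1)`. -/
def RelEuler (d : ℕ) (peos : ℝ → ℝ) (O : Set (Fin (d + 1) → ℝ))
    (ϱ : (Fin (d + 1) → ℝ) → ℝ) (u : (Fin (d + 1) → ℝ) → Fin (d + 1) → ℝ) : Prop :=
  ∀ q ∈ O,
    ((∑ μ, u q μ * pder d μ ϱ q)
      + (peos (ϱ q) + ϱ q) * ∑ μ, pder d μ (fun z => u z μ) q = 0) ∧
    ∀ α, (peos (ϱ q) + ϱ q) * (∑ μ, u q μ * pder d μ (fun z => mlt d α * u z α) q)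
        + pder d α (fun z => peos (ϱ z)) q
        + mlt d α * u q α * ∑ μ, u q μ * pder d μ (fun z => peos (ϱ z)) q = 0

section Calculus

variable {𝕜 E : Type*} [NontriviallyNormedField 𝕜] [NormedAddCommGroup E] [NormedSpace 𝕜 E]

theorem fderiv_comp_apply_eq_deriv_mul {g : 𝕜 → 𝕜} {F : E → 𝕜} {q : E}
    (hg : DifferentiableAt 𝕜 g (F q)) (hF : DifferentiableAt 𝕜 F q) (w : E) :
    fderiv 𝕜 (fun z => g (F z)) q w = deriv g (F q) * fderiv 𝕜 F q w := by
  rw [show (fun z => g (F z)) = g ∘ F from rfl,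
    (hg.hasDerivAt.comp_hasFDerivAt q hF.hasFDerivAt).fderiv]
  rfl

theorem fderiv_mul_apply {F G : E → 𝕜} {q : E}
    (hF : DifferentiableAt 𝕜 F q) (hG : DifferentiableAt 𝕜 G q) (w : E) :
    fderiv 𝕜 (fun z => F z * G z) q w = fderiv 𝕜 F q w * G q + F q * fderiv 𝕜 G q w := by
  rw [fderiv_fun_mul hF hG]
  simp only [add_apply, smul_apply, smul_eq_mul]
  ring

end Calculus

section Minkowski

variable {d : ℕ}

theorem mlt_mul_self (α : Fin (d + 1)) : mlt d α * mlt d α = 1 := by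
  unfold mlt
  split_ifs <;> norm_num

theorem sum_mul_pder (a : Fin (d + 1) → ℝ) (F : (Fin (d + 1) → ℝ) → ℝ) (q : Fin (d + 1) → ℝ) :
    ∑ μ, a μ * pder d μ F q = fderiv ℝ F q a := by
  conv_rhs => rw [← Finset.univ_sum_single a]
  simp only [map_sum, pder]
  refine Finset.sum_congr rfl fun μ _ => ?_
  rw [← smul_eq_mul, ← map_smul, ← Pi.single_smul, smul_eq_mul, mul_one]

theorem pder_zero_add_sum_div_mul_pder_succ (a : Fin (d + 1) → ℝ) (ha : a 0 ≠ 0)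
    (F : (Fin (d + 1) → ℝ) → ℝ) (q : Fin (d + 1) → ℝ) :
    pder d 0 F q + ∑ i : Fin d, a i.succ / a 0 * pder d i.succ F q = fderiv ℝ F q a / a 0 := by
  rw [← sum_mul_pder, Fin.sum_univ_succ, add_div, Finset.sum_div]
  congr 1
  · field_simp
  · exact Finset.sum_congr rfl fun i _ => by ring

theorem eq_sqrt_of_sum_mlt_eq_neg_one {a : Fin (d + 1) → ℝ} (ha0 : 0 < a 0)
    (ha : ∑ α, mlt d α * a α * a α = -1) {c : ℝ} (hc : 0 ≤ c) :
    c * a 0 = Real.sqrt (c ^ 2 + ∑ i : Fin d, (c * a i.succ) ^ 2) := by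
  simp only [Fin.sum_univ_succ, mlt, Fin.succ_ne_zero, if_true, if_false, one_mul,
    neg_one_mul, ← sq] at ha
  rw [eq_comm, Real.sqrt_eq_iff_mul_self_eq (by positivity) (by positivity)]
  simp only [mul_pow, ← Finset.mul_sum]
  linear_combination c ^ 2 * ha

end Minkowski

theorem RelEuler.transport_velocity {d : ℕ} {peos : ℝ → ℝ} {O : Set (Fin (d + 1) → ℝ)}
    {ϱ : (Fin (d + 1) → ℝ) → ℝ} {u : (Fin (d + 1) → ℝ) → Fin (d + 1) → ℝ}
    (h : RelEuler d peos O ϱ u) {q : Fin (d + 1) → ℝ} (hq : q ∈ O) (α : Fin (d + 1))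
    (hϱ : DifferentiableAt ℝ ϱ q) (hu : DifferentiableAt ℝ (fun z => u z α) q)
    (hp : DifferentiableAt ℝ peos (ϱ q)) :
    (peos (ϱ q) + ϱ q) * fderiv ℝ (fun z => u z α) q (u q)
      + deriv peos (ϱ q) * (mlt d α * pder d α ϱ q + u q α * fderiv ℝ ϱ q (u q)) = 0 := by
  have hmom := (h q hq).2 α
  rw [sum_mul_pder, sum_mul_pder] at hmom
  simp only [pder, fderiv_const_mul hu, fderiv_comp_apply_eq_deriv_mul hp hϱ,
    smul_apply, smul_eq_mul] at hmom ⊢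
  linear_combination mlt d α * hmom - ((peos (ϱ q) + ϱ q) * fderiv ℝ (fun z => u z α) q (u q)
    + deriv peos (ϱ q) * u q α * fderiv ℝ ϱ q (u q)) * mlt_mul_self α

theorem relativistic_euler_velocity_diagonalization_general
    (d : ℕ) (peos f : ℝ → ℝ)
    (O : Set (Fin (d + 1) → ℝ)) (hO : IsOpen O)
    (ϱ : (Fin (d + 1) → ℝ) → ℝ) (u : (Fin (d + 1) → ℝ) → Fin (d + 1) → ℝ)
    (hp : ContDiffOn ℝ 1 peos (Ioi 0))
    (hϱ : ContDiffOn ℝ 1 ϱ O) (hu : ContDiffOn ℝ 1 u O)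
    (hϱpos : ∀ q ∈ O, 0 < ϱ q)
    (hpϱ : ∀ q ∈ O, 0 < peos (ϱ q) + ϱ q)
    (hu0 : ∀ q ∈ O, 0 < u q 0)
    (hnorm : ∀ q ∈ O, ∑ α, mlt d α * u q α * u q α = -1)
    (hf : ContDiffOn ℝ 1 f (Ioi 0)) (hfpos : ∀ y > (0 : ℝ), 0 < f y)
    (hfode : ∀ y > (0 : ℝ), deriv f y * (peos y + y) = deriv peos y * f y)
    (heuler : RelEuler d peos O ϱ u) :
    ∀ q ∈ O, ∀ α : Fin (d + 1),
      (pder d 0 (fun z => f (ϱ z) * u z α) q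
        + (∑ i : Fin d, (f (ϱ q) * u q i.succ / (f (ϱ q) * u q 0))
            * pder d i.succ (fun z => f (ϱ z) * u z α) q)
        + (deriv peos (ϱ q) * f (ϱ q) ^ 2
            / ((peos (ϱ q) + ϱ q) * (f (ϱ q) * u q 0))) * mlt d α * pder d α ϱ q = 0)
      ∧ f (ϱ q) * u q 0
          = Real.sqrt (f (ϱ q) ^ 2 + ∑ i : Fin d, (f (ϱ q) * u q i.succ) ^ 2) := by
  intro q hq α
  have hϱq : ϱ q ∈ Ioi (0 : ℝ) := hϱpos q hq
  have hfq : 0 < f (ϱ q) := hfpos _ hϱq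
  have hu0q : 0 < u q 0 := hu0 q hq
  have hϱd : DifferentiableAt ℝ ϱ q := (hϱ.contDiffAt (hO.mem_nhds hq)).differentiableAt one_ne_zero
  have hud : ∀ β, DifferentiableAt ℝ (fun z => u z β) q :=
    differentiableAt_pi.mp ((hu.contDiffAt (hO.mem_nhds hq)).differentiableAt one_ne_zero)
  have hfd : DifferentiableAt ℝ f (ϱ q) :=
    (hf.contDiffAt (isOpen_Ioi.mem_nhds hϱq)).differentiableAt one_ne_zero
  have hpd : DifferentiableAt ℝ peos (ϱ q) :=
    (hp.contDiffAt (isOpen_Ioi.mem_nhds hϱq)).differentiableAt one_ne_zero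
  refine ⟨?_, eq_sqrt_of_sum_mlt_eq_neg_one hu0q (hnorm q hq) hfq.le⟩
  have hmom := heuler.transport_velocity hq α hϱd (hud α) hpd
  have hfϱd : DifferentiableAt ℝ (fun z => f (ϱ z)) q := hfd.comp q hϱd
  simp only [mul_div_mul_left _ _ hfq.ne', pder_zero_add_sum_div_mul_pder_succ _ hu0q.ne',
    fderiv_mul_apply hfϱd (hud α), fderiv_comp_apply_eq_deriv_mul hfd hϱd]
  have hPq : 0 < peos (ϱ q) + ϱ q := hpϱ q hq
  field_simp
  linear_combination f (ϱ q) * hmom + u q α * fderiv ℝ ϱ q (u q) * hfode (ϱ q) hϱq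

/-- **Diagonalization of the velocity equation** (equation (1.12)): for a `C¹` solution
`(ϱ,u)` of the relativistic Euler equations with `ϱ > 0`, `p+ϱ > 0`, `u⁰ > 0`,
`u^αu_α = −1`, and `v^α = f(ϱ)u^α` with `f'/f = p'/(p+ϱ)`, one has
`D_t v^α + (c_s² f²/((p+ϱ)v⁰)) m^{αμ} ∂_μ ϱ = 0` and `v⁰ = √(f² + |v|²)`. -/
theorem relativistic_euler_velocity_diagonalization
    (d : ℕ) (hd : 1 ≤ d) (peos f : ℝ → ℝ)
    (O : Set (Fin (d + 1) → ℝ)) (hO : IsOpen O)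
    (ϱ : (Fin (d + 1) → ℝ) → ℝ) (u : (Fin (d + 1) → ℝ) → Fin (d + 1) → ℝ)
    (hp : ContDiffOn ℝ 1 peos (Ioi 0))
    (hϱ : ContDiffOn ℝ 1 ϱ O) (hu : ContDiffOn ℝ 1 u O)
    (hϱpos : ∀ q ∈ O, 0 < ϱ q)
    (hpϱ : ∀ q ∈ O, 0 < peos (ϱ q) + ϱ q)
    (hu0 : ∀ q ∈ O, 0 < u q 0)
    (hnorm : ∀ q ∈ O, ∑ α, mlt d α * u q α * u q α = -1)
    (hf : ContDiffOn ℝ 1 f (Ioi 0)) (hfpos : ∀ y > (0 : ℝ), 0 < f y)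
    (hfode : ∀ y > (0 : ℝ), deriv f y * (peos y + y) = deriv peos y * f y)
    (heuler : RelEuler d peos O ϱ u) :
    ∀ q ∈ O, ∀ α : Fin (d + 1),
      (pder d 0 (fun z => f (ϱ z) * u z α) q
        + (∑ i : Fin d, (f (ϱ q) * u q i.succ / (f (ϱ q) * u q 0))
            * pder d i.succ (fun z => f (ϱ z) * u z α) q)
        + (deriv peos (ϱ q) * f (ϱ q) ^ 2
            / ((peos (ϱ q) + ϱ q) * (f (ϱ q) * u q 0))) * mlt d α * pder d α ϱ q = 0)
      ∧ f (ϱ q) * u q 0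
          = Real.sqrt (f (ϱ q) ^ 2 + ∑ i : Fin d, (f (ϱ q) * u q i.succ) ^ 2) :=
  relativistic_euler_velocity_diagonalization_general d peos f O hO ϱ u hp hϱ hu hϱpos hpϱ hu0 hnorm
    hf hfpos hfode heuler
end
end

section
/- Diagonalization of the relativistic Euler density equation: Let O ⊂ ℝ^{1+d} be open and let (ϱ,u) be a C¹ solution of the relativistic Euler equations on O with ϱ > 0, p(ϱ)+ϱ > 0, u⁰ > 0, u^α u_α = −1, and 0 ≤ c_s²(ϱ) := p'(ϱ) ≤ 1. Let f : (0,∞) → (0,∞) be C¹ with f'(y)/f(y) = p'(y)/(p(y)+y), and set v^α = f(ϱ)u^α and a₀ = 1 − c_s² |v|²/(v⁰)², which is positive. Then on O: ∂_t ϱ + (v^i/v⁰)∂_i ϱ + ((p+ϱ)/(a₀ v⁰)) (δ^{ij} − v^i v^j/(v⁰)²) ∂_i v_j − (2 c_s² f² / (a₀ (v⁰)³)) v^i ∂_i ϱ = 0. -/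
open Set

noncomputable section

/-!
Write `D_t = ∂_t + (u^i/u^0)∂_i`. The time component of the momentum equation expresses
`(p+ϱ) u^μ∂_μ u^0` through `∂ϱ`, and differentiating `u^αu_α = −1` gives
`u^j∂_i u^j = u^0∂_i u^0`. Substituting both into the continuity equation turns `∂_μu^μ` into
`(δ^{ij} − u^iu^j/(u^0)²)∂_i u_j` plus a multiple of `D_tϱ`: this is the diagonal form for `v = u`.
Rescaling to `v = f(ϱ)u` leaves the projector and `a₀` unchanged, and since
`(δ^{ij} − u^iu^j/(u^0)²)u_j = u^i/(u^0)²`, the extra term `f'(ϱ)u_j∂_iϱ` of `∂_iv_j` is absorbed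
by `f'(p+ϱ) = p'f`; it turns the coefficient `c_s²` of `f²v^i∂_iϱ` into `2c_s²`.
-/

section Calculus

open Topology

variable {d : ℕ} {q : Fin (d + 1) → ℝ}

theorem pder_comp {g : ℝ → ℝ} {F : (Fin (d + 1) → ℝ) → ℝ} (hg : DifferentiableAt ℝ g (F q))
    (hF : DifferentiableAt ℝ F q) (μ : Fin (d + 1)) :
    pder d μ (fun z => g (F z)) q = deriv g (F q) * pder d μ F q := by
  rw [pder, pder, fderiv_fun_comp q hg hF, ContinuousLinearMap.comp_apply, fderiv_eq_smul_deriv,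
    smul_eq_mul, mul_comm]

theorem pder_mul {F G : (Fin (d + 1) → ℝ) → ℝ} (hF : DifferentiableAt ℝ F q)
    (hG : DifferentiableAt ℝ G q) (μ : Fin (d + 1)) :
    pder d μ (fun z => F z * G z) q = F q * pder d μ G q + G q * pder d μ F q := by
  simp [pder, fderiv_fun_mul hF hG]

theorem pder_const_mul {F : (Fin (d + 1) → ℝ) → ℝ} (hF : DifferentiableAt ℝ F q) (k : ℝ)
    (μ : Fin (d + 1)) : pder d μ (fun z => k * F z) q = k * pder d μ F q := by
  simp [pder, fderiv_const_mul hF]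

theorem pder_eq_zero_of_eventuallyEq_const {F : (Fin (d + 1) → ℝ) → ℝ} {k : ℝ}
    (hF : F =ᶠ[𝓝 q] fun _ => k) (μ : Fin (d + 1)) : pder d μ F q = 0 := by
  simp [pder, hF.fderiv_eq]

end Calculus

section Minkowski

open Topology

variable {d : ℕ}

theorem sum_mlt_mul_mul (x y : Fin (d + 1) → ℝ) :
    ∑ α, mlt d α * x α * y α = ∑ i : Fin d, x i.succ * y i.succ - x 0 * y 0 := by
  simp only [Fin.sum_univ_succ, mlt, Fin.succ_ne_zero, ite_true, ite_false, one_mul, neg_mul]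
  ring

theorem sum_sq_succ_eq_of_mlt {x : Fin (d + 1) → ℝ} (hx : ∑ α, mlt d α * x α * x α = -1) :
    ∑ i : Fin d, x i.succ ^ 2 = x 0 ^ 2 - 1 := by
  rw [sum_mlt_mul_mul] at hx
  simp only [sq]
  linarith

theorem pder_sum_mlt_mul_self {u : (Fin (d + 1) → ℝ) → Fin (d + 1) → ℝ} {q : Fin (d + 1) → ℝ}
    (hu : ∀ α, DifferentiableAt ℝ (fun z => u z α) q) (μ : Fin (d + 1)) :
    pder d μ (fun z => ∑ α, mlt d α * u z α * u z α) q
      = 2 * ∑ α, mlt d α * u q α * pder d μ (fun z => u z α) q := by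
  have hterm : ∀ α, DifferentiableAt ℝ (fun z => mlt d α * u z α * u z α) q :=
    fun α => ((hu α).const_mul _).mul (hu α)
  rw [pder, fderiv_fun_sum fun α _ => hterm α, sum_apply, Finset.mul_sum]
  refine Finset.sum_congr rfl fun α _ => ?_
  rw [← pder, pder_mul ((hu α).const_mul _) (hu α), pder_const_mul (hu α)]
  ring

theorem sum_succ_mul_pder_eq_of_mlt {O : Set (Fin (d + 1) → ℝ)} (hO : IsOpen O)
    {u : (Fin (d + 1) → ℝ) → Fin (d + 1) → ℝ} {q : Fin (d + 1) → ℝ} (hq : q ∈ O)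
    (hu : ∀ α, DifferentiableAt ℝ (fun z => u z α) q) {k : ℝ}
    (hnorm : ∀ z ∈ O, ∑ α, mlt d α * u z α * u z α = k) (μ : Fin (d + 1)) :
    ∑ j : Fin d, u q j.succ * pder d μ (fun z => u z j.succ) q
      = u q 0 * pder d μ (fun z => u z 0) q := by
  have hconst : (fun z => ∑ α, mlt d α * u z α * u z α) =ᶠ[𝓝 q] fun _ => k :=
    Filter.eventually_of_mem (hO.mem_nhds hq) hnorm
  have h := pder_eq_zero_of_eventuallyEq_const hconst μ
  rw [pder_sum_mlt_mul_self hu, sum_mlt_mul_mul (u q)] at h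
  linarith

end Minkowski

namespace RelEuler

open Finset

section Equations

variable {d : ℕ} {peos : ℝ → ℝ} {O : Set (Fin (d + 1) → ℝ)} {ϱ : (Fin (d + 1) → ℝ) → ℝ}
  {u : (Fin (d + 1) → ℝ) → Fin (d + 1) → ℝ} {q : Fin (d + 1) → ℝ}

theorem continuity_eq (h : RelEuler d peos O ϱ u) (hq : q ∈ O) :
    u q 0 * pder d 0 ϱ q + ∑ i : Fin d, u q i.succ * pder d i.succ ϱ q
      + (peos (ϱ q) + ϱ q)
        * (pder d 0 (fun z => u z 0) q + ∑ i : Fin d, pder d i.succ (fun z => u z i.succ) q)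
      = 0 := by
  simpa only [Fin.sum_univ_succ, add_assoc] using (h q hq).1

theorem time_component_eq (h : RelEuler d peos O ϱ u) (hq : q ∈ O)
    (hp : DifferentiableAt ℝ peos (ϱ q)) (hϱ : DifferentiableAt ℝ ϱ q)
    (hu : DifferentiableAt ℝ (fun z => u z 0) q) :
    (peos (ϱ q) + ϱ q) * (u q 0 * pder d 0 (fun z => u z 0) q
        + ∑ i : Fin d, u q i.succ * pder d i.succ (fun z => u z 0) q)
      = deriv peos (ϱ q) * (pder d 0 ϱ q
        - u q 0 * (u q 0 * pder d 0 ϱ q + ∑ i : Fin d, u q i.succ * pder d i.succ ϱ q)) := by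
  have hvel : ∑ μ, u q μ * pder d μ (fun z => mlt d 0 * u z 0) q
      = -∑ μ, u q μ * pder d μ (fun z => u z 0) q := by
    rw [← sum_neg_distrib]
    exact sum_congr rfl fun μ _ => by rw [pder_const_mul hu, mlt, if_pos rfl]; ring
  have hpres : ∑ μ, u q μ * pder d μ (fun z => peos (ϱ z)) q
      = deriv peos (ϱ q) * ∑ μ, u q μ * pder d μ ϱ q := by
    rw [mul_sum]
    exact sum_congr rfl fun μ _ => by rw [pder_comp hp hϱ]; ring
  have h0 := (h q hq).2 0
  rw [hvel, hpres, pder_comp hp hϱ, Fin.sum_univ_succ, Fin.sum_univ_succ] at h0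
  simp only [mlt, if_pos] at h0
  linear_combination -h0

end Equations

section Algebra

variable {d : ℕ}

def spatialProj (v0 : ℝ) (v : Fin d → ℝ) (i j : Fin d) : ℝ :=
  (if i = j then 1 else 0) - v i * v j / v0 ^ 2

def a₀ (c v0 : ℝ) (v : Fin d → ℝ) : ℝ :=
  1 - c * (∑ i, v i ^ 2) / v0 ^ 2

theorem spatialProj_mul_left {F : ℝ} (hF : F ≠ 0) (v0 : ℝ) (v : Fin d → ℝ) :
    spatialProj (F * v0) (fun i => F * v i) = spatialProj v0 v := by
  ext i j
  simp only [spatialProj]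
  field_simp

theorem a₀_mul_left {F : ℝ} (hF : F ≠ 0) (c v0 : ℝ) (v : Fin d → ℝ) :
    a₀ c (F * v0) (fun i => F * v i) = a₀ c v0 v := by
  simp only [a₀, mul_pow, ← mul_sum]
  field_simp

theorem a₀_eq_of_sum_sq {c u0 : ℝ} {w : Fin d → ℝ} (hw : ∑ i, w i ^ 2 = u0 ^ 2 - 1) :
    a₀ c u0 w = 1 - c * (u0 ^ 2 - 1) / u0 ^ 2 := by
  rw [a₀, hw]

theorem a₀_pos {c u0 : ℝ} {w : Fin d → ℝ} (hw : ∑ i, w i ^ 2 = u0 ^ 2 - 1) (hc : c ≤ 1) :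
    0 < a₀ c u0 w := by
  have hu0 : 1 ≤ u0 ^ 2 := by
    have : 0 ≤ ∑ i, w i ^ 2 := sum_nonneg fun i _ => sq_nonneg (w i)
    linarith
  rw [a₀_eq_of_sum_sq hw, sub_pos, div_lt_one (by positivity)]
  nlinarith

theorem sum_spatialProj_mul_self (v0 : ℝ) (v : Fin d → ℝ) (i : Fin d) :
    ∑ j, spatialProj v0 v i j * v j = v i * (1 - (∑ j, v j ^ 2) / v0 ^ 2) := by
  simp only [spatialProj, sub_mul, sum_sub_distrib, ite_mul, one_mul, zero_mul, sum_ite_eq,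
    Finset.mem_univ, if_true, mul_sub, mul_one, sum_div, mul_sum]
  congr 1
  exact sum_congr rfl fun j _ => by ring

theorem sum_sum_spatialProj_mul {u0 : ℝ} {w B0 : Fin d → ℝ} {B : Fin d → Fin d → ℝ}
    (hB : ∀ i, ∑ j, w j * B i j = u0 * B0 i) (hu0 : u0 ≠ 0) :
    ∑ i, ∑ j, spatialProj u0 w i j * B i j = ∑ i, B i i - (∑ i, w i * B0 i) / u0 := by
  simp only [spatialProj, sub_mul, sum_sub_distrib, ite_mul, one_mul, zero_mul, sum_ite_eq,
    Finset.mem_univ, if_true, sum_div]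
  congr 1
  refine sum_congr rfl fun i _ => ?_
  calc ∑ j, w i * w j / u0 ^ 2 * B i j = w i * (∑ j, w j * B i j) / u0 ^ 2 := by
        rw [mul_sum, sum_div]; exact sum_congr rfl fun j _ => by ring
    _ = w i * B0 i / u0 := by rw [hB]; field_simp

theorem diagonalized_density_eq_zero {u0 P c A0 B00 : ℝ} {w A B0 : Fin d → ℝ}
    {B : Fin d → Fin d → ℝ} (hw : ∑ i, w i ^ 2 = u0 ^ 2 - 1) (hu0 : u0 ≠ 0)
    (ha : a₀ c u0 w ≠ 0) (hB : ∀ i, ∑ j, w j * B i j = u0 * B0 i)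
    (hcont : u0 * A0 + ∑ i, w i * A i + P * (B00 + ∑ i, B i i) = 0)
    (htime : P * (u0 * B00 + ∑ i, w i * B0 i) = c * (A0 - u0 * (u0 * A0 + ∑ i, w i * A i))) :
    A0 + ∑ i, w i / u0 * A i + P / (a₀ c u0 w * u0) * ∑ i, ∑ j, spatialProj u0 w i j * B i j
      - c / (a₀ c u0 w * u0 ^ 3) * ∑ i, w i * A i = 0 := by
  have hS : ∑ i, w i / u0 * A i = (∑ i, w i * A i) / u0 := by
    rw [sum_div]; exact sum_congr rfl fun i _ => by ring
  rw [hS, sum_sum_spatialProj_mul hB hu0]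
  rw [a₀_eq_of_sum_sq hw] at ha ⊢
  have hK : u0 ^ 2 - c * (u0 ^ 2 - 1) ≠ 0 := by
    contrapose! ha; field_simp; linear_combination ha
  field_simp
  linear_combination u0 ^ 2 * hcont - u0 * htime

theorem diagonalized_density_rescale {u0 P c F F' A0 : ℝ} {w A : Fin d → ℝ}
    {B dv : Fin d → Fin d → ℝ} (hw : ∑ i, w i ^ 2 = u0 ^ 2 - 1) (hu0 : u0 ≠ 0)
    (ha : a₀ c u0 w ≠ 0) (hF : F ≠ 0) (hF' : F' * P = c * F)
    (hdv : ∀ i j, dv i j = F * B i j + w j * (F' * A i)) :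
    A0 + ∑ i, F * w i / (F * u0) * A i
        + P / (a₀ c (F * u0) (fun i => F * w i) * (F * u0))
          * ∑ i, ∑ j, spatialProj (F * u0) (fun i => F * w i) i j * dv i j
        - 2 * c * F ^ 2 / (a₀ c (F * u0) (fun i => F * w i) * (F * u0) ^ 3)
          * ∑ i, F * w i * A i
      = A0 + ∑ i, w i / u0 * A i + P / (a₀ c u0 w * u0) * ∑ i, ∑ j, spatialProj u0 w i j * B i j
        - c / (a₀ c u0 w * u0 ^ 3) * ∑ i, w i * A i := by
  have hdv_sum : ∑ i, ∑ j, spatialProj u0 w i j * dv i j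
      = F * ∑ i, ∑ j, spatialProj u0 w i j * B i j + F' * (∑ i, w i * A i) / u0 ^ 2 := by
    simp only [hdv, mul_add, sum_add_distrib, mul_sum]
    congr 1
    · exact sum_congr rfl fun i _ => sum_congr rfl fun j _ => by ring
    · rw [sum_div]
      refine sum_congr rfl fun i _ => ?_
      have hproj := sum_spatialProj_mul_self u0 w i
      rw [hw] at hproj
      calc ∑ j, spatialProj u0 w i j * (w j * (F' * A i))
          = F' * A i * ∑ j, spatialProj u0 w i j * w j := by
            rw [mul_sum]; exact sum_congr rfl fun j _ => by ring
        _ = _ := by rw [hproj]; field_simp; ring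
  have hS : ∑ i, F * w i * A i = F * ∑ i, w i * A i := by
    rw [mul_sum]; exact sum_congr rfl fun i _ => by ring
  simp only [spatialProj_mul_left hF, a₀_mul_left hF, hdv_sum, hS, mul_div_mul_left _ _ hF]
  field_simp
  linear_combination (∑ i, w i * A i) * hF'

end Algebra

end RelEuler

theorem relativistic_euler_density_diagonalization_general
    (d : ℕ) (peos f : ℝ → ℝ)
    (O : Set (Fin (d + 1) → ℝ)) (hO : IsOpen O)
    (ϱ : (Fin (d + 1) → ℝ) → ℝ) (u : (Fin (d + 1) → ℝ) → Fin (d + 1) → ℝ)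
    (hp : ContDiffOn ℝ 1 peos (Ioi 0))
    (hϱ : ContDiffOn ℝ 1 ϱ O) (hu : ContDiffOn ℝ 1 u O)
    (hϱpos : ∀ q ∈ O, 0 < ϱ q)
    (hu0 : ∀ q ∈ O, 0 < u q 0)
    (hnorm : ∀ q ∈ O, ∑ α, mlt d α * u q α * u q α = -1)
    (hcs : ∀ q ∈ O, 0 ≤ deriv peos (ϱ q) ∧ deriv peos (ϱ q) ≤ 1)
    (hf : ContDiffOn ℝ 1 f (Ioi 0)) (hfpos : ∀ y > (0 : ℝ), 0 < f y)
    (hfode : ∀ y > (0 : ℝ), deriv f y * (peos y + y) = deriv peos y * f y)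
    (heuler : RelEuler d peos O ϱ u) :
    ∀ q ∈ O,
      (0 < 1 - deriv peos (ϱ q) * (∑ i : Fin d, (f (ϱ q) * u q i.succ) ^ 2)
            / (f (ϱ q) * u q 0) ^ 2) ∧
      pder d 0 ϱ q
        + (∑ i : Fin d, (f (ϱ q) * u q i.succ / (f (ϱ q) * u q 0)) * pder d i.succ ϱ q)
        + ((peos (ϱ q) + ϱ q)
              / ((1 - deriv peos (ϱ q) * (∑ i : Fin d, (f (ϱ q) * u q i.succ) ^ 2)
                    / (f (ϱ q) * u q 0) ^ 2) * (f (ϱ q) * u q 0)))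
            * (∑ i : Fin d, ∑ j : Fin d,
                ((if i = j then (1 : ℝ) else 0)
                    - (f (ϱ q) * u q i.succ) * (f (ϱ q) * u q j.succ)
                        / (f (ϱ q) * u q 0) ^ 2)
                  * pder d i.succ (fun z => f (ϱ z) * u z j.succ) q)
        - (2 * deriv peos (ϱ q) * f (ϱ q) ^ 2
              / ((1 - deriv peos (ϱ q) * (∑ i : Fin d, (f (ϱ q) * u q i.succ) ^ 2)
                    / (f (ϱ q) * u q 0) ^ 2) * (f (ϱ q) * u q 0) ^ 3))
            * ∑ i : Fin d, (f (ϱ q) * u q i.succ) * pder d i.succ ϱ q = 0 := by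
  intro q hq
  have hρ := hϱpos q hq
  have hϱd : DifferentiableAt ℝ ϱ q :=
    (hϱ.contDiffAt (hO.mem_nhds hq)).differentiableAt one_ne_zero
  have hud : ∀ α, DifferentiableAt ℝ (fun z => u z α) q :=
    differentiableAt_pi.mp ((hu.contDiffAt (hO.mem_nhds hq)).differentiableAt one_ne_zero)
  have hpd : DifferentiableAt ℝ peos (ϱ q) :=
    (hp.contDiffAt (Ioi_mem_nhds hρ)).differentiableAt one_ne_zero
  have hfd : DifferentiableAt ℝ f (ϱ q) :=
    (hf.contDiffAt (Ioi_mem_nhds hρ)).differentiableAt one_ne_zero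
  have hF := (hfpos _ hρ).ne'
  have hw := sum_sq_succ_eq_of_mlt (hnorm q hq)
  have ha := RelEuler.a₀_pos hw (hcs q hq).2
  have hdv : ∀ i j : Fin d, pder d i.succ (fun z => f (ϱ z) * u z j.succ) q
      = f (ϱ q) * pder d i.succ (fun z => u z j.succ) q
        + u q j.succ * (deriv f (ϱ q) * pder d i.succ ϱ q) := fun i j => by
    rw [pder_mul (F := fun z => f (ϱ z)) (hfd.comp q hϱd) (hud _), pder_comp hfd hϱd]
  refine ⟨by rwa [← RelEuler.a₀_mul_left hF] at ha, ?_⟩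
  exact (RelEuler.diagonalized_density_rescale hw (hu0 q hq).ne' ha.ne' hF (hfode _ hρ) hdv).trans
    (RelEuler.diagonalized_density_eq_zero hw (hu0 q hq).ne' ha.ne'
      (fun i => sum_succ_mul_pder_eq_of_mlt hO hq hud hnorm i.succ) (heuler.continuity_eq hq)
      (heuler.time_component_eq hq hpd hϱd (hud 0)))

/-- **Diagonalization of the density equation** (equation (1.13)): for a `C¹` solution
`(ϱ,u)` of the relativistic Euler equations with `ϱ > 0`, `p+ϱ > 0`, `u⁰ > 0`,
`u^αu_α = −1`, `0 ≤ c_s² ≤ 1`, and `v^α = f(ϱ)u^α` with `f'/f = p'/(p+ϱ)`, the quantity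
`a₀ = 1 − c_s²|v|²/(v⁰)²` is positive and
`D_t ϱ + ((p+ϱ)/(a₀v⁰))(δ^{ij} − v^iv^j/(v⁰)²)∂_i v_j − (2c_s²f²/(a₀(v⁰)³)) v^i∂_i ϱ = 0`. -/
theorem relativistic_euler_density_diagonalization
    (d : ℕ) (hd : 1 ≤ d) (peos f : ℝ → ℝ)
    (O : Set (Fin (d + 1) → ℝ)) (hO : IsOpen O)
    (ϱ : (Fin (d + 1) → ℝ) → ℝ) (u : (Fin (d + 1) → ℝ) → Fin (d + 1) → ℝ)
    (hp : ContDiffOn ℝ 1 peos (Ioi 0))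
    (hϱ : ContDiffOn ℝ 1 ϱ O) (hu : ContDiffOn ℝ 1 u O)
    (hϱpos : ∀ q ∈ O, 0 < ϱ q)
    (hpϱ : ∀ q ∈ O, 0 < peos (ϱ q) + ϱ q)
    (hu0 : ∀ q ∈ O, 0 < u q 0)
    (hnorm : ∀ q ∈ O, ∑ α, mlt d α * u q α * u q α = -1)
    (hcs : ∀ q ∈ O, 0 ≤ deriv peos (ϱ q) ∧ deriv peos (ϱ q) ≤ 1)
    (hf : ContDiffOn ℝ 1 f (Ioi 0)) (hfpos : ∀ y > (0 : ℝ), 0 < f y)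
    (hfode : ∀ y > (0 : ℝ), deriv f y * (peos y + y) = deriv peos y * f y)
    (heuler : RelEuler d peos O ϱ u) :
    ∀ q ∈ O,
      (0 < 1 - deriv peos (ϱ q) * (∑ i : Fin d, (f (ϱ q) * u q i.succ) ^ 2)
            / (f (ϱ q) * u q 0) ^ 2) ∧
      pder d 0 ϱ q
        + (∑ i : Fin d, (f (ϱ q) * u q i.succ / (f (ϱ q) * u q 0)) * pder d i.succ ϱ q)
        + ((peos (ϱ q) + ϱ q)
              / ((1 - deriv peos (ϱ q) * (∑ i : Fin d, (f (ϱ q) * u q i.succ) ^ 2)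
                    / (f (ϱ q) * u q 0) ^ 2) * (f (ϱ q) * u q 0)))
            * (∑ i : Fin d, ∑ j : Fin d,
                ((if i = j then (1 : ℝ) else 0)
                    - (f (ϱ q) * u q i.succ) * (f (ϱ q) * u q j.succ)
                        / (f (ϱ q) * u q 0) ^ 2)
                  * pder d i.succ (fun z => f (ϱ z) * u z j.succ) q)
        - (2 * deriv peos (ϱ q) * f (ϱ q) ^ 2
              / ((1 - deriv peos (ϱ q) * (∑ i : Fin d, (f (ϱ q) * u q i.succ) ^ 2)
                    / (f (ϱ q) * u q 0) ^ 2) * (f (ϱ q) * u q 0) ^ 3))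
            * ∑ i : Fin d, (f (ϱ q) * u q i.succ) * pder d i.succ ϱ q = 0 :=
  relativistic_euler_density_diagonalization_general d peos f O hO ϱ u hp hϱ hu hϱpos hu0 hnorm hcs
    hf hfpos hfode heuler
end
end
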